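/- arXiv:1801.06304 — 4 statements merged into one kernel-verified Lean document; each statement's English description precedes it below -/
import Mathlib

section
/- (Lemma 3.2) Let a ≥ 1 be a real number, K a positive integer, t0 a real number with t0 ≥ max{2, 4K}, k a nonnegative integer with k ≤ 2K, and t a real number with t ≥ t0. Then ∫_t^∞ (s − t) s^k e^{−a s} ds ≤ t^k e^{−a t} · (4 / a²). -/
open MeasureTheory Real

lemma aux_shift_integral (b : ℝ) (hb : 0 < b) (t : ℝ) :
    IntegrableOn (fun s => (s - t) * Real.exp (-b * (s - t))) (Set.Ioi t) ∧
    ∫ s in Set.Ioi t, (s - t) * Real.exp (-b * (s - t)) = 1 / b ^ 2 := by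
  have h0 : IntegrableOn (fun u : ℝ => u * Real.exp (-b * u)) (Set.Ioi 0) := by
    have := integrableOn_rpow_mul_exp_neg_mul_rpow (p := 1) (s := 1)
      (by norm_num) (by norm_num) hb
    simpa [Real.rpow_one] using this
  have hval : ∫ u in Set.Ioi 0, u * Real.exp (-b * u) = 1 / b ^ 2 := by
    have h := Real.integral_rpow_mul_exp_neg_mul_Ioi (a := 2) (r := b) (by norm_num) hb
    rw [Real.Gamma_two] at h
    have h1 : ((1:ℝ) / b) ^ (2:ℝ) = 1 / b ^ 2 := by
      rw [show (2:ℝ) = ((2:ℕ):ℝ) by norm_num, Real.rpow_natCast, div_pow, one_pow]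
    rw [h1, mul_one] at h
    rw [← h]
    refine setIntegral_congr_fun measurableSet_Ioi (fun u hu => ?_)
    rw [show (2:ℝ) - 1 = 1 by norm_num, Real.rpow_one, neg_mul]
  have hpre : (fun x : ℝ => x + t) ⁻¹' Set.Ioi t = Set.Ioi 0 := by
    ext x; simp
  have hmp := measurePreserving_add_right (volume : Measure ℝ) t
  have hemb := measurableEmbedding_addRight t
  constructor
  · refine (hmp.integrableOn_comp_preimage hemb
      (f := fun s => (s - t) * Real.exp (-b * (s - t))) (s := Set.Ioi t)).1 ?_
    rw [hpre]
    refine h0.congr_fun (fun u hu => ?_) measurableSet_Ioi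
    simp [Function.comp]
  · have := hmp.setIntegral_preimage_emb hemb
      (fun s => (s - t) * Real.exp (-b * (s - t))) (Set.Ioi t)
    rw [hpre] at this
    rw [← this, ← hval]
    refine setIntegral_congr_fun measurableSet_Ioi (fun u hu => ?_)
    simp

lemma aux_pow_bound (a t u : ℝ) (k : ℕ) (ha : 1 ≤ a) (ht : 0 < t)
    (h2k : 2 * (k : ℝ) ≤ t) (hu : 0 ≤ u) :
    (t + u) ^ k ≤ t ^ k * Real.exp (a / 2 * u) := by
  have h1 : t + u = t * (1 + u / t) := by field_simp
  have h2 : (1 + u / t) ^ k ≤ Real.exp ((k : ℝ) * (u / t)) := by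
    rw [Real.exp_nat_mul]
    refine pow_le_pow_left₀ (by positivity) ?_ k
    linarith [Real.add_one_le_exp (u / t)]
  have h3 : (k : ℝ) * (u / t) ≤ a / 2 * u := by
    rcases eq_or_lt_of_le hu with h | h
    · simp [← h]
    · have hkt : (k : ℝ) / t ≤ 1 / 2 := by
        rw [div_le_div_iff₀ ht (by norm_num)]; linarith
      have : (k : ℝ) * (u / t) = ((k : ℝ) / t) * u := by ring
      rw [this]
      have h12 : (1:ℝ) / 2 ≤ a / 2 := by linarith
      nlinarith
  calc (t + u) ^ k = t ^ k * (1 + u / t) ^ k := by rw [h1, mul_pow]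
    _ ≤ t ^ k * Real.exp ((k : ℝ) * (u / t)) := by
        exact mul_le_mul_of_nonneg_left h2 (by positivity)
    _ ≤ t ^ k * Real.exp (a / 2 * u) := by
        exact mul_le_mul_of_nonneg_left (Real.exp_le_exp.2 h3) (by positivity)

/-- Lemma 3.2: For `a ≥ 1`, `K ≥ 1`, `t0 ≥ max{2, 4K}`, `k ≤ 2K`,
and `t ≥ t0`, one has `∫_t^∞ (s − t) s^k e^{−a s} ds ≤ t^k e^{−a t} · (4 / a²)`. -/
theorem integral_sub_mul_pow_mul_exp_neg_le
    (a : ℝ) (ha : 1 ≤ a) (K : ℕ) (hK : 1 ≤ K)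
    (t0 : ℝ) (ht0 : max 2 (4 * (K : ℝ)) ≤ t0)
    (k : ℕ) (hk : k ≤ 2 * K) (t : ℝ) (ht : t0 ≤ t) :
    ∫ s in Set.Ioi t, (s - t) * s ^ k * Real.exp (-a * s)
      ≤ t ^ k * Real.exp (-a * t) * (4 / a ^ 2) := by
  have ha0 : 0 < a := by linarith
  have h2 : (2:ℝ) ≤ t0 := le_trans (le_max_left _ _) ht0
  have h4K : 4 * (K:ℝ) ≤ t0 := le_trans (le_max_right _ _) ht0
  have htpos : 0 < t := by linarith
  have h2k : 2 * (k:ℝ) ≤ t := by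
    have : (k:ℝ) ≤ 2 * (K:ℝ) := by exact_mod_cast hk
    linarith
  have hb : 0 < a / 2 := by linarith
  obtain ⟨hint, hval⟩ := aux_shift_integral (a / 2) hb t
  set C := t ^ k * Real.exp (-a * t) with hC
  have hCpos : 0 < C := by positivity
  have hptwise : ∀ s ∈ Set.Ioi t,
      (s - t) * s ^ k * Real.exp (-a * s)
        ≤ C * ((s - t) * Real.exp (-(a / 2) * (s - t))) := by
    intro s hs
    set u := s - t with hu
    have hu0 : 0 ≤ u := by simp only [hu]; linarith [Set.mem_Ioi.1 hs]
    have hs_eq : s = t + u := by simp [hu]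
    have hkey : (t + u) ^ k * Real.exp (-a * u) ≤ t ^ k * Real.exp (-(a / 2) * u) := by
      calc (t + u) ^ k * Real.exp (-a * u)
          ≤ (t ^ k * Real.exp (a / 2 * u)) * Real.exp (-a * u) :=
            mul_le_mul_of_nonneg_right (aux_pow_bound a t u k ha htpos h2k hu0)
              (Real.exp_pos _).le
        _ = t ^ k * Real.exp (-(a / 2) * u) := by
            rw [mul_assoc, ← Real.exp_add]; congr 1; ring
    have hexp : Real.exp (-a * s) = Real.exp (-a * t) * Real.exp (-a * u) := by
      rw [← Real.exp_add]; congr 1; rw [hs_eq]; ring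
    calc (s - t) * s ^ k * Real.exp (-a * s)
        = (u * Real.exp (-a * t)) * ((t + u) ^ k * Real.exp (-a * u)) := by
          rw [hexp, hs_eq]; ring
      _ ≤ (u * Real.exp (-a * t)) * (t ^ k * Real.exp (-(a / 2) * u)) :=
          mul_le_mul_of_nonneg_left hkey (by positivity)
      _ = C * (u * Real.exp (-(a / 2) * u)) := by rw [hC]; ring
  have hg : IntegrableOn (fun s => C * ((s - t) * Real.exp (-(a / 2) * (s - t))))
      (Set.Ioi t) := hint.const_mul C
  have hmono : ∫ s in Set.Ioi t, (s - t) * s ^ k * Real.exp (-a * s)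
      ≤ ∫ s in Set.Ioi t, C * ((s - t) * Real.exp (-(a / 2) * (s - t))) := by
    refine integral_mono_of_nonneg ?_ hg ?_
    · refine (ae_restrict_iff' measurableSet_Ioi).2 (ae_of_all _ (fun s hs => ?_))
      have : (0:ℝ) ≤ s - t := by linarith [Set.mem_Ioi.1 hs]
      have hspos : 0 < s := lt_trans htpos (Set.mem_Ioi.1 hs)
      positivity
    · exact (ae_restrict_iff' measurableSet_Ioi).2 (ae_of_all _ hptwise)
  have hcalc : ∫ s in Set.Ioi t, C * ((s - t) * Real.exp (-(a / 2) * (s - t)))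
      = C * (1 / (a / 2) ^ 2) := by
    rw [integral_const_mul, hval]
  have hfin : (1:ℝ) / (a / 2) ^ 2 = 4 / a ^ 2 := by
    field_simp; ring
  rw [hcalc, hfin] at hmono
  exact hmono
end

section
/- (Lemma 3.4, contraction inequality) Let a ≥ 1 and a2 > 0 be real numbers, K a positive integer, t0 ≥ max{2, 4K}, and k a nonnegative integer with k ≤ 2K. Let g : [t0, ∞) → ℝ be measurable with |g(s)| ≤ 20 a2 for all s ≥ t0, and let Φ : [t0, ∞) → ℝ be measurable. Define the operator P by P[Y](t) = ∫_t^∞ (s − t)(g(s) Y(s) + Φ(s)) ds. Then for any continuous Y1, Y2 : [t0, ∞) → ℝ with ‖Y1‖_{a,t0,k} < ∞ and ‖Y2‖_{a,t0,k} < ∞, one has ‖P[Y1] − P[Y2]‖_{a,t0,k} ≤ (80 a2 / a²) · ‖Y1 − Y2‖_{a,t0,k}. -/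
open MeasureTheory Real

/-- The weighted norm `‖F‖_{a,t0,k} = sup_{t ≥ t0} t^{−k} e^{a t} |F(t)|`. -/
noncomputable def wnorm (a t0 : ℝ) (k : ℕ) (F : ℝ → ℝ) : ℝ :=
  ⨆ t : Set.Ici t0, Real.exp (a * t) * |F t| / (t : ℝ) ^ k

/-- Finiteness of the weighted norm `‖F‖_{a,t0,k} < ∞`. -/
def wnormFinite (a t0 : ℝ) (k : ℕ) (F : ℝ → ℝ) : Prop :=
  BddAbove (Set.range fun t : Set.Ici t0 => Real.exp (a * t) * |F t| / (t : ℝ) ^ k)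

open Filter in
section

lemma aux_hasDeriv (c t : ℝ) (hc : c ≠ 0) (s : ℝ) :
    HasDerivAt (fun s => -((s - t) / c + 1 / c ^ 2) * Real.exp (-(c * s)))
      ((s - t) * Real.exp (-(c * s))) s := by
  have h1 : HasDerivAt (fun s : ℝ => -((s - t) / c + 1 / c ^ 2)) (-(1 / c)) s := by
    exact ((((hasDerivAt_id s).sub_const t).div_const c).add_const (1 / c ^ 2)).neg
  have h2 : HasDerivAt (fun s : ℝ => Real.exp (-(c * s)))
      (Real.exp (-(c * s)) * (-c)) s := by
    simpa using (((hasDerivAt_id s).const_mul c).neg).exp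
  have := h1.mul h2
  refine HasDerivAt.congr_deriv this ?_
  field_simp
  ring

lemma aux_tendsto (c t : ℝ) (hc : 0 < c) :
    Tendsto (fun s => -((s - t) / c + 1 / c ^ 2) * Real.exp (-(c * s))) atTop (nhds 0) := by
  have h1 : Tendsto (fun s : ℝ => s * Real.exp (-(c * s))) atTop (nhds 0) := by
    have := tendsto_rpow_mul_exp_neg_mul_atTop_nhds_zero 1 c hc
    refine this.congr' ?_
    filter_upwards [Filter.eventually_ge_atTop (0:ℝ)] with x hx
    rw [Real.rpow_one]
    ring_nf
  have h2 : Tendsto (fun s : ℝ => Real.exp (-(c * s))) atTop (nhds 0) := by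
    have := tendsto_rpow_mul_exp_neg_mul_atTop_nhds_zero 0 c hc
    refine this.congr' ?_
    filter_upwards [Filter.eventually_ge_atTop (0:ℝ)] with x hx
    rw [Real.rpow_zero, one_mul]
    ring_nf
  have h3 := (h1.const_mul (-(1 / c))).add (h2.const_mul (t / c - 1 / c ^ 2))
  simp only [mul_zero, add_zero] at h3
  exact h3.congr fun s => by ring

lemma aux_intOn (c t : ℝ) (hc : 0 < c) :
    IntegrableOn (fun s => (s - t) * Real.exp (-(c * s))) (Set.Ioi t) := by
  refine integrableOn_Ioi_deriv_of_nonneg' (fun s _ => aux_hasDeriv c t hc.ne' s) ?_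
    (aux_tendsto c t hc)
  intro s hs
  have : t ≤ s := le_of_lt hs
  have := Real.exp_pos (-(c * s))
  nlinarith

lemma aux_intval (c t : ℝ) (hc : 0 < c) :
    ∫ s in Set.Ioi t, (s - t) * Real.exp (-(c * s)) = Real.exp (-(c * t)) / c ^ 2 := by
  rw [integral_Ioi_of_hasDerivAt_of_nonneg' (fun s _ => aux_hasDeriv c t hc.ne' s)
    (fun s hs => by
      have : t ≤ s := le_of_lt hs
      have := Real.exp_pos (-(c * s))
      nlinarith)
    (aux_tendsto c t hc)]
  rw [sub_self, zero_div, zero_add, zero_sub]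
  ring

lemma aux_decay {a t s : ℝ} (k : ℕ) (ht : 0 < t) (hts : t ≤ s) (hk : (k : ℝ) ≤ a * t / 2) :
    s ^ k * Real.exp (-(a * s)) ≤ t ^ k * Real.exp (-(a * t / 2)) * Real.exp (-(a * s / 2)) := by
  have hs0 : (0:ℝ) ≤ s := le_trans ht.le hts
  have h1 : s ≤ t * Real.exp ((s - t) / t) := by
    have h := Real.add_one_le_exp ((s - t) / t)
    have h2 : t * ((s - t) / t + 1) ≤ t * Real.exp ((s - t) / t) :=
      mul_le_mul_of_nonneg_left h ht.le
    calc s = t * ((s - t) / t + 1) := by field_simp; ring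
      _ ≤ _ := h2
  have h2 : s ^ k ≤ t ^ k * Real.exp (a * (s - t) / 2) := by
    calc s ^ k ≤ (t * Real.exp ((s - t) / t)) ^ k := pow_le_pow_left₀ hs0 h1 k
      _ = t ^ k * Real.exp ((s - t) / t) ^ k := mul_pow _ _ _
      _ = t ^ k * Real.exp ((k : ℝ) * ((s - t) / t)) := by rw [← Real.exp_nat_mul]
      _ ≤ t ^ k * Real.exp (a * (s - t) / 2) := by
          have hst : 0 ≤ (s - t) / t := div_nonneg (by linarith) ht.le
          have : (k : ℝ) * ((s - t) / t) ≤ (a * t / 2) * ((s - t) / t) :=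
            mul_le_mul_of_nonneg_right hk hst
          have heq : (a * t / 2) * ((s - t) / t) = a * (s - t) / 2 := by field_simp
          refine mul_le_mul_of_nonneg_left (Real.exp_le_exp.mpr ?_) (by positivity)
          linarith [heq ▸ this]
  calc s ^ k * Real.exp (-(a * s))
      ≤ t ^ k * Real.exp (a * (s - t) / 2) * Real.exp (-(a * s)) :=
        mul_le_mul_of_nonneg_right h2 (Real.exp_pos _).le
    _ = t ^ k * Real.exp (-(a * t / 2)) * Real.exp (-(a * s / 2)) := by
        rw [mul_assoc, mul_assoc, ← Real.exp_add, ← Real.exp_add]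
        congr 2
        ring

end

/-- Lemma 3.4, contraction inequality: with
`P[Y](t) = ∫_t^∞ (s − t)(g(s) Y(s) + Φ(s)) ds` and `|g| ≤ 20 a2`,
`‖P[Y1] − P[Y2]‖_{a,t0,k} ≤ (80 a2 / a²) ‖Y1 − Y2‖_{a,t0,k}`. -/
theorem contraction_inequality
    (a a2 : ℝ) (ha : 1 ≤ a) (ha2 : 0 < a2) (K : ℕ) (hK : 1 ≤ K)
    (t0 : ℝ) (ht0 : max 2 (4 * (K : ℝ)) ≤ t0)
    (k : ℕ) (hk : k ≤ 2 * K)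
    (g Φ : ℝ → ℝ) (hgm : Measurable g) (hΦm : Measurable Φ)
    (hg : ∀ s ≥ t0, |g s| ≤ 20 * a2)
    (Y1 Y2 : ℝ → ℝ)
    (hY1c : ContinuousOn Y1 (Set.Ici t0)) (hY2c : ContinuousOn Y2 (Set.Ici t0))
    (hY1 : wnormFinite a t0 k Y1) (hY2 : wnormFinite a t0 k Y2) :
    wnorm a t0 k
        (fun t => (∫ s in Set.Ioi t, (s - t) * (g s * Y1 s + Φ s))
                  - ∫ s in Set.Ioi t, (s - t) * (g s * Y2 s + Φ s))
      ≤ 80 * a2 / a ^ 2 * wnorm a t0 k (fun t => Y1 t - Y2 t) := by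
  classical
  have ht2 : (2:ℝ) ≤ t0 := le_trans (le_max_left _ _) ht0
  have ht4K : 4 * (K:ℝ) ≤ t0 := le_trans (le_max_right _ _) ht0
  have ht0pos : (0:ℝ) < t0 := by linarith
  have ha0 : (0:ℝ) < a := by linarith
  haveI : Nonempty (Set.Ici t0) := ⟨⟨t0, Set.self_mem_Ici⟩⟩
  set C := wnorm a t0 k (fun t => Y1 t - Y2 t) with hCdef
  obtain ⟨M1, hM1⟩ := hY1
  obtain ⟨M2, hM2⟩ := hY2
  have hbdd : BddAbove (Set.range fun t : Set.Ici t0 =>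
      Real.exp (a * t) * |(fun t => Y1 t - Y2 t) t| / (t : ℝ) ^ k) := by
    refine ⟨M1 + M2, ?_⟩
    rintro x ⟨t, rfl⟩
    have h1 := hM1 (Set.mem_range_self t)
    have h2 := hM2 (Set.mem_range_self t)
    have htpos : (0:ℝ) < (t:ℝ) := lt_of_lt_of_le ht0pos t.2
    calc Real.exp (a * t) * |Y1 t - Y2 t| / (t:ℝ) ^ k
        ≤ Real.exp (a * t) * (|Y1 t| + |Y2 t|) / (t:ℝ) ^ k := by
          gcongr
          exact abs_sub _ _
      _ = Real.exp (a * t) * |Y1 t| / (t:ℝ) ^ k + Real.exp (a * t) * |Y2 t| / (t:ℝ) ^ k := by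
          ring
      _ ≤ M1 + M2 := add_le_add h1 h2
  have hCle : ∀ s, t0 ≤ s → Real.exp (a * s) * |Y1 s - Y2 s| / s ^ k ≤ C :=
    fun s hs => le_ciSup hbdd (⟨s, Set.mem_Ici.mpr hs⟩ : Set.Ici t0)
  have hC0 : 0 ≤ C := le_trans (by positivity) (hCle t0 le_rfl)
  have hYptw : ∀ s, t0 ≤ s → |Y1 s - Y2 s| ≤ C * (s ^ k * Real.exp (-(a * s))) := by
    intro s hs
    have hspos : (0:ℝ) < s := lt_of_lt_of_le ht0pos hs
    have h := hCle s hs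
    rw [div_le_iff₀ (by positivity)] at h
    have h' : |Y1 s - Y2 s| = Real.exp (a * s) * |Y1 s - Y2 s| * Real.exp (-(a * s)) := by
      rw [mul_comm (Real.exp (a * s)) _, mul_assoc, ← Real.exp_add]
      simp
    rw [h']
    calc Real.exp (a * s) * |Y1 s - Y2 s| * Real.exp (-(a * s))
        ≤ C * s ^ k * Real.exp (-(a * s)) :=
          mul_le_mul_of_nonneg_right h (Real.exp_pos _).le
      _ = C * (s ^ k * Real.exp (-(a * s))) := by ring
  refine ciSup_le ?_
  rintro ⟨t, ht⟩
  simp only [Set.mem_Ici] at ht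
  have htpos : (0:ℝ) < t := lt_of_lt_of_le ht0pos ht
  have hkt : (k : ℝ) ≤ a * t / 2 := by
    have h1 : (k : ℝ) ≤ 2 * (K : ℝ) := by exact_mod_cast hk
    have h2 : t / 2 ≤ a * t / 2 := by nlinarith
    linarith
  set c : ℝ := a / 2 with hcdef
  have hcpos : 0 < c := by positivity
  -- the difference integrand
  set F12 : ℝ → ℝ := fun s => (s - t) * (g s * (Y1 s - Y2 s)) with hF12def
  have hbound : ∀ s ∈ Set.Ioi t, ‖F12 s‖ ≤
      (20 * a2 * C * (t ^ k * Real.exp (-(a * t / 2)))) * ((s - t) * Real.exp (-(c * s))) := by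
    intro s hs
    have hts : t ≤ s := le_of_lt hs
    have hst0 : t0 ≤ s := le_trans ht hts
    have hst : (0:ℝ) ≤ s - t := by linarith
    have hgs := hg s hst0
    have hY := hYptw s hst0
    have hdecay := aux_decay (a := a) (t := t) (s := s) k htpos hts hkt
    have : ‖F12 s‖ = (s - t) * (|g s| * |Y1 s - Y2 s|) := by
      rw [hF12def]
      simp only [Real.norm_eq_abs, abs_mul, abs_of_nonneg hst]
    rw [this]
    have h1 : |g s| * |Y1 s - Y2 s| ≤ 20 * a2 * (C * (s ^ k * Real.exp (-(a * s)))) :=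
      mul_le_mul hgs hY (abs_nonneg _) (by positivity)
    have h2 : C * (s ^ k * Real.exp (-(a * s))) ≤
        C * (t ^ k * Real.exp (-(a * t / 2)) * Real.exp (-(a * s / 2))) :=
      mul_le_mul_of_nonneg_left hdecay hC0
    have h3 : (s - t) * (|g s| * |Y1 s - Y2 s|) ≤
        (s - t) * (20 * a2 * (C * (t ^ k * Real.exp (-(a * t / 2)) * Real.exp (-(a * s / 2))))) := by
      refine mul_le_mul_of_nonneg_left ?_ hst
      calc |g s| * |Y1 s - Y2 s| ≤ 20 * a2 * (C * (s ^ k * Real.exp (-(a * s)))) := h1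
        _ ≤ _ := mul_le_mul_of_nonneg_left h2 (by positivity)
    calc (s - t) * (|g s| * |Y1 s - Y2 s|) ≤ _ := h3
      _ = (20 * a2 * C * (t ^ k * Real.exp (-(a * t / 2)))) * ((s - t) * Real.exp (-(c * s))) := by
          rw [hcdef]; ring_nf
  have hBint : IntegrableOn (fun s => (20 * a2 * C * (t ^ k * Real.exp (-(a * t / 2)))) *
      ((s - t) * Real.exp (-(c * s)))) (Set.Ioi t) :=
    (aux_intOn c t hcpos).const_mul _
  have hF12meas : AEStronglyMeasurable F12 (volume.restrict (Set.Ioi t)) := by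
    have hYae : AEStronglyMeasurable (fun s => Y1 s - Y2 s) (volume.restrict (Set.Ioi t)) :=
      ((hY1c.sub hY2c).mono
        (fun x hx => Set.mem_Ici.mpr (le_trans ht (le_of_lt hx)))).aestronglyMeasurable
        measurableSet_Ioi
    exact ((continuous_id.sub continuous_const).aestronglyMeasurable.mul
      (hgm.aestronglyMeasurable.mul hYae))
  have hF12int : IntegrableOn F12 (Set.Ioi t) := by
    refine Integrable.mono' hBint hF12meas ?_
    filter_upwards [ae_restrict_mem measurableSet_Ioi] with s hs
    exact hbound s hs
  have hF12bound : ‖∫ s in Set.Ioi t, F12 s‖ ≤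
      (20 * a2 * C * (t ^ k * Real.exp (-(a * t / 2)))) * (Real.exp (-(c * t)) / c ^ 2) := by
    have := norm_integral_le_of_norm_le hBint
      (Filter.eventually_of_mem (ae_restrict_mem measurableSet_Ioi) hbound)
    calc ‖∫ s in Set.Ioi t, F12 s‖
        ≤ ∫ s in Set.Ioi t, (20 * a2 * C * (t ^ k * Real.exp (-(a * t / 2)))) *
            ((s - t) * Real.exp (-(c * s))) := this
      _ = (20 * a2 * C * (t ^ k * Real.exp (-(a * t / 2)))) *
            ∫ s in Set.Ioi t, (s - t) * Real.exp (-(c * s)) := MeasureTheory.integral_const_mul _ _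
      _ = _ := by rw [aux_intval c t hcpos]
  have hDbound : |(∫ s in Set.Ioi t, (s - t) * (g s * Y1 s + Φ s))
      - ∫ s in Set.Ioi t, (s - t) * (g s * Y2 s + Φ s)| ≤
      (80 * a2 / a ^ 2 * C * t ^ k) * Real.exp (-(a * t)) := by
    have hRHSeq : (20 * a2 * C * (t ^ k * Real.exp (-(a * t / 2)))) * (Real.exp (-(c * t)) / c ^ 2)
        = (80 * a2 / a ^ 2 * C * t ^ k) * Real.exp (-(a * t)) := by
      have hee : Real.exp (-(a * t / 2)) * Real.exp (-(c * t)) = Real.exp (-(a * t)) := by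
        rw [← Real.exp_add, hcdef]; congr 1; ring
      have hc2 : c ^ 2 = a ^ 2 / 4 := by rw [hcdef]; ring
      calc 20 * a2 * C * (t ^ k * Real.exp (-(a * t / 2))) * (Real.exp (-(c * t)) / c ^ 2)
          = 20 * a2 * C * t ^ k / c ^ 2 * (Real.exp (-(a * t / 2)) * Real.exp (-(c * t))) := by
            ring
        _ = 20 * a2 * C * t ^ k / (a ^ 2 / 4) * Real.exp (-(a * t)) := by rw [hee, hc2]
        _ = 80 * a2 / a ^ 2 * C * t ^ k * Real.exp (-(a * t)) := by
            field_simp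
            ring
    by_cases h1 : IntegrableOn (fun s => (s - t) * (g s * Y1 s + Φ s)) (Set.Ioi t)
    · have h2 : IntegrableOn (fun s => (s - t) * (g s * Y2 s + Φ s)) (Set.Ioi t) := by
        refine (h1.sub hF12int).congr ?_
        refine Filter.Eventually.of_forall fun s => ?_
        simp only [Pi.sub_apply, Pi.add_apply, hF12def]; ring
      have hdiff : (∫ s in Set.Ioi t, (s - t) * (g s * Y1 s + Φ s))
          - ∫ s in Set.Ioi t, (s - t) * (g s * Y2 s + Φ s) = ∫ s in Set.Ioi t, F12 s := by
        rw [← integral_sub h1 h2]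
        refine integral_congr_ae (Filter.Eventually.of_forall fun s => ?_)
        simp only [Pi.sub_apply, Pi.add_apply, hF12def]; ring
      rw [hdiff, ← Real.norm_eq_abs]
      calc ‖∫ s in Set.Ioi t, F12 s‖ ≤ _ := hF12bound
        _ = _ := hRHSeq
    · have h2 : ¬ IntegrableOn (fun s => (s - t) * (g s * Y2 s + Φ s)) (Set.Ioi t) := by
        intro h2
        refine h1 ((h2.add hF12int).congr ?_)
        refine Filter.Eventually.of_forall fun s => ?_
        simp only [Pi.sub_apply, Pi.add_apply, hF12def]; ring
      rw [integral_undef h1, integral_undef h2]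
      simp only [sub_zero, abs_zero]
      positivity
  -- conclude
  have htk : (0:ℝ) < t ^ k := by positivity
  rw [div_le_iff₀ htk]
  calc Real.exp (a * t) * |(∫ s in Set.Ioi t, (s - t) * (g s * Y1 s + Φ s))
          - ∫ s in Set.Ioi t, (s - t) * (g s * Y2 s + Φ s)|
      ≤ Real.exp (a * t) * ((80 * a2 / a ^ 2 * C * t ^ k) * Real.exp (-(a * t))) :=
        mul_le_mul_of_nonneg_left hDbound (Real.exp_pos _).le
    _ = (80 * a2 / a ^ 2 * C) * t ^ k * (Real.exp (a * t) * Real.exp (-(a * t))) := by ring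
    _ = 80 * a2 / a ^ 2 * C * t ^ k := by rw [← Real.exp_add]; simp
end

section
/- (Lemma 3.4, fixed point bound) Let a, a2 > 0 be real numbers with a ≥ 1 and a² ≥ 225 a2 (i.e., a ≥ 15√a2), K a positive integer, t0 ≥ max{2, 4K}, and k a nonnegative integer with k ≤ 2K. Let g : [t0, ∞) → ℝ be measurable with |g(s)| ≤ 20 a2 for all s ≥ t0, and let Φ : [t0, ∞) → ℝ be measurable with ‖Φ‖_{a,t0,k} < ∞. Suppose Y0 : [t0, ∞) → ℝ is continuous with ‖Y0‖_{a,t0,k} < ∞ and satisfies Y0(t) = ∫_t^∞ (s − t)(g(s) Y0(s) + Φ(s)) ds for all t ≥ t0. Then ‖Y0‖_{a,t0,k} ≤ (8 / a²) · ‖Φ‖_{a,t0,k}. -/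
open MeasureTheory Real

/-- Integral of `(s-t) e^{-b(s-t)}` over `(t,∞)` exists and equals `1/b²`. -/
lemma aux_int (b t : ℝ) (hb : 0 < b) :
    IntegrableOn (fun s => (s - t) * Real.exp (-(b * (s - t)))) (Set.Ioi t) ∧
    (∫ s in Set.Ioi t, (s - t) * Real.exp (-(b * (s - t)))) = 1 / b ^ 2 := by
  have hb' : b ≠ 0 := ne_of_gt hb
  set Ψ : ℝ → ℝ := fun s => -(((s - t) / b + 1 / b ^ 2) * Real.exp (-(b * (s - t)))) with hΨ
  have hderiv : ∀ s ∈ Set.Ici t, HasDerivAt Ψ ((s - t) * Real.exp (-(b * (s - t)))) s := by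
    intro s _
    have h1 : HasDerivAt (fun s : ℝ => (s - t) / b + 1 / b ^ 2) (1 / b) s := by
      exact HasDerivAt.add_const (1 / b ^ 2) (((hasDerivAt_id s).sub_const t).div_const b)
    have h2 : HasDerivAt (fun s : ℝ => Real.exp (-(b * (s - t))))
        (Real.exp (-(b * (s - t))) * (-b)) s := by
      have hin : HasDerivAt (fun s : ℝ => -(b * (s - t))) (-b) s := by
        have := (((hasDerivAt_id s).sub_const t).const_mul b).neg
        simp only [mul_one] at this
        exact this
      exact hin.exp
    have h3 : HasDerivAt (fun s => -(((s - t) / b + 1 / b ^ 2) * Real.exp (-(b * (s - t))))) _ s :=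
      (h1.mul h2).neg
    convert h3 using 1
    field_simp
    ring
  have hpos : ∀ s ∈ Set.Ioi t, 0 ≤ (s - t) * Real.exp (-(b * (s - t))) := fun s hs =>
    mul_nonneg (by simp at hs; linarith) (Real.exp_nonneg _)
  have htend : Filter.Tendsto Ψ Filter.atTop (nhds 0) := by
    have hbu : Filter.Tendsto (fun s : ℝ => b * (s - t)) Filter.atTop Filter.atTop := by
      apply Filter.Tendsto.const_mul_atTop hb
      exact Filter.tendsto_atTop_add_const_right _ (-t) Filter.tendsto_id
    have h1 : Filter.Tendsto (fun v : ℝ => v ^ 1 * Real.exp (-v)) Filter.atTop (nhds 0) :=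
      tendsto_pow_mul_exp_neg_atTop_nhds_zero 1
    have h2 : Filter.Tendsto (fun v : ℝ => Real.exp (-v)) Filter.atTop (nhds 0) :=
      Real.tendsto_exp_atBot.comp Filter.tendsto_neg_atTop_atBot
    have h3 := (h1.comp hbu).const_mul (1 / b ^ 2)
    have h4 := (h2.comp hbu).const_mul (1 / b ^ 2)
    have h5 := ((h3.add h4).neg)
    simp only [mul_zero, add_zero, neg_zero] at h5
    apply h5.congr
    intro s
    simp only [Function.comp, hΨ, pow_one]
    field_simp
  constructor
  · exact integrableOn_Ioi_deriv_of_nonneg' hderiv hpos htend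
  · rw [integral_Ioi_of_hasDerivAt_of_nonneg' hderiv hpos htend]
    simp [hΨ]

set_option maxHeartbeats 1000000 in
/-- Lemma 3.4, fixed point bound: if `Y0` is a fixed point of
`Y ↦ ∫_t^∞ (s − t)(g(s) Y(s) + Φ(s)) ds` with `|g| ≤ 20 a2` and `a² ≥ 225 a2`,
then `‖Y0‖_{a,t0,k} ≤ (8 / a²) ‖Φ‖_{a,t0,k}`. -/
theorem fixed_point_bound
    (a a2 : ℝ) (ha : 1 ≤ a) (ha2 : 0 < a2) (haa : 225 * a2 ≤ a ^ 2)
    (K : ℕ) (hK : 1 ≤ K)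
    (t0 : ℝ) (ht0 : max 2 (4 * (K : ℝ)) ≤ t0)
    (k : ℕ) (hk : k ≤ 2 * K)
    (g Φ : ℝ → ℝ) (hgm : Measurable g) (hΦm : Measurable Φ)
    (hg : ∀ s ≥ t0, |g s| ≤ 20 * a2)
    (hΦ : wnormFinite a t0 k Φ)
    (Y0 : ℝ → ℝ) (hY0c : ContinuousOn Y0 (Set.Ici t0))
    (hY0fin : wnormFinite a t0 k Y0)
    (hY0 : ∀ t ≥ t0, Y0 t = ∫ s in Set.Ioi t, (s - t) * (g s * Y0 s + Φ s)) :
    wnorm a t0 k Y0 ≤ 8 / a ^ 2 * wnorm a t0 k Φ := by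
  have ht02 : (2 : ℝ) ≤ t0 := le_trans (le_max_left _ _) ht0
  have ht0K : 4 * (K : ℝ) ≤ t0 := le_trans (le_max_right _ _) ht0
  have ht0pos : (0 : ℝ) < t0 := by linarith
  have ha0 : (0 : ℝ) < a := by linarith
  have ha2sq : (0 : ℝ) < a ^ 2 := by positivity
  haveI : Nonempty (Set.Ici t0) := ⟨⟨t0, Set.self_mem_Ici⟩⟩
  set N := wnorm a t0 k Y0 with hN
  set M := wnorm a t0 k Φ with hM
  -- pointwise bounds from the sup
  have hbndY : ∀ s, t0 ≤ s → |Y0 s| ≤ N * (s ^ k * Real.exp (-(a * s))) := by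
    intro s hs
    have hsp : (0 : ℝ) < s ^ k := pow_pos (by linarith) k
    have h := le_ciSup hY0fin ⟨s, hs⟩
    calc |Y0 s| = Real.exp (a * s) * |Y0 s| / s ^ k * (s ^ k * Real.exp (-(a * s))) := by
          rw [Real.exp_neg]
          field_simp
      _ ≤ N * (s ^ k * Real.exp (-(a * s))) :=
          mul_le_mul_of_nonneg_right h (by positivity)
  have hbndΦ : ∀ s, t0 ≤ s → |Φ s| ≤ M * (s ^ k * Real.exp (-(a * s))) := by
    intro s hs
    have hsp : (0 : ℝ) < s ^ k := pow_pos (by linarith) k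
    have h := le_ciSup hΦ ⟨s, hs⟩
    calc |Φ s| = Real.exp (a * s) * |Φ s| / s ^ k * (s ^ k * Real.exp (-(a * s))) := by
          rw [Real.exp_neg]
          field_simp
      _ ≤ M * (s ^ k * Real.exp (-(a * s))) :=
          mul_le_mul_of_nonneg_right h (by positivity)
  have hN0 : 0 ≤ N :=
    le_trans (by positivity) (le_ciSup hY0fin ⟨t0, Set.self_mem_Ici⟩)
  have hM0 : 0 ≤ M :=
    le_trans (by positivity) (le_ciSup hΦ ⟨t0, Set.self_mem_Ici⟩)
  set C := 20 * a2 * N + M with hC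
  have hC0 : 0 ≤ C := by positivity
  -- main bound for each t
  have main : ∀ t : ℝ, t0 ≤ t →
      Real.exp (a * t) * |Y0 t| / t ^ k ≤ 4 * C / a ^ 2 := by
    intro t ht
    have htpos : (0 : ℝ) < t := by linarith
    have htk : (0 : ℝ) < t ^ k := pow_pos htpos k
    have hb : (0 : ℝ) < a / 2 := by linarith
    obtain ⟨hint, hval⟩ := aux_int (a / 2) t hb
    set G2 : ℝ → ℝ := fun s =>
      C * (t ^ k * Real.exp (-(a * t))) * ((s - t) * Real.exp (-(a / 2 * (s - t)))) with hG2
    have hG2int : IntegrableOn G2 (Set.Ioi t) := hint.const_mul _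
    have hG2val : (∫ s in Set.Ioi t, G2 s)
        = C * (t ^ k * Real.exp (-(a * t))) * (4 / a ^ 2) := by
      rw [hG2, MeasureTheory.integral_const_mul, hval]
      congr 1
      field_simp
      ring
    -- pointwise comparison
    have hpt : ∀ s, s ∈ Set.Ioi t → |(s - t) * (g s * Y0 s + Φ s)| ≤ G2 s := by
      intro s hs
      simp only [Set.mem_Ioi] at hs
      have hst0 : t0 ≤ s := le_trans ht (le_of_lt hs)
      have hst : 0 ≤ s - t := by linarith
      have hspos : (0 : ℝ) < s := by linarith
      -- step: bound of the bracket
      have hbr : |g s * Y0 s + Φ s| ≤ C * (s ^ k * Real.exp (-(a * s))) := by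
        have h1 : |g s * Y0 s| ≤ 20 * a2 * |Y0 s| := by
          rw [abs_mul]
          exact mul_le_mul_of_nonneg_right (hg s hst0) (abs_nonneg _)
        have h2 := hbndY s hst0
        have h3 := hbndΦ s hst0
        have h4 : (0 : ℝ) ≤ 20 * a2 := by linarith
        calc |g s * Y0 s + Φ s| ≤ |g s * Y0 s| + |Φ s| := abs_add_le _ _
          _ ≤ 20 * a2 * |Y0 s| + |Φ s| := by linarith
          _ ≤ 20 * a2 * (N * (s ^ k * Real.exp (-(a * s))))
              + M * (s ^ k * Real.exp (-(a * s))) := by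
              have := mul_le_mul_of_nonneg_left h2 h4
              linarith
          _ = C * (s ^ k * Real.exp (-(a * s))) := by rw [hC]; ring
      -- step: exponential comparison
      have hexp : s ^ k * Real.exp (-(a * s))
          ≤ t ^ k * Real.exp (-(a * t)) * Real.exp (-(a / 2 * (s - t))) := by
        have hkt : (k : ℝ) * ((s - t) / t) ≤ a / 2 * (s - t) := by
          have hk2 : (k : ℝ) ≤ 2 * K := by exact_mod_cast hk
          have hkt2 : 2 * (k : ℝ) ≤ t := by linarith
          rw [mul_div_assoc', div_le_iff₀ htpos]
          nlinarith [mul_le_mul_of_nonneg_right hkt2 hst,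
            mul_nonneg (mul_nonneg hst htpos.le) (by linarith : (0:ℝ) ≤ a - 1)]
        have hsk : s ^ k ≤ t ^ k * Real.exp ((k : ℝ) * ((s - t) / t)) := by
          have hstt : s = t * (1 + (s - t) / t) := by field_simp; ring
          have h1 : (1 + (s - t) / t) ≤ Real.exp ((s - t) / t) := by
            have := Real.add_one_le_exp ((s - t) / t)
            linarith
          have h2 : (1 + (s - t) / t) ^ k ≤ Real.exp ((s - t) / t) ^ k :=
            pow_le_pow_left₀ (by positivity) h1 k
          calc s ^ k = t ^ k * (1 + (s - t) / t) ^ k := by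
                rw [← mul_pow]; rw [← hstt]
            _ ≤ t ^ k * Real.exp ((s - t) / t) ^ k :=
                mul_le_mul_of_nonneg_left h2 (le_of_lt htk)
            _ = t ^ k * Real.exp ((k : ℝ) * ((s - t) / t)) := by
                rw [← Real.exp_nat_mul]
        calc s ^ k * Real.exp (-(a * s))
            ≤ t ^ k * Real.exp ((k : ℝ) * ((s - t) / t)) * Real.exp (-(a * s)) :=
              mul_le_mul_of_nonneg_right hsk (Real.exp_nonneg _)
          _ ≤ t ^ k * Real.exp (a / 2 * (s - t)) * Real.exp (-(a * s)) :=
              mul_le_mul_of_nonneg_right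
                (mul_le_mul_of_nonneg_left (Real.exp_le_exp.mpr hkt) (le_of_lt htk))
                (Real.exp_nonneg _)
          _ = t ^ k * Real.exp (-(a * t)) * Real.exp (-(a / 2 * (s - t))) := by
              rw [mul_assoc, mul_assoc, ← Real.exp_add, ← Real.exp_add]
              congr 1
              ring
      calc |(s - t) * (g s * Y0 s + Φ s)| = (s - t) * |g s * Y0 s + Φ s| := by
            rw [abs_mul, abs_of_nonneg hst]
        _ ≤ (s - t) * (C * (s ^ k * Real.exp (-(a * s)))) :=
            mul_le_mul_of_nonneg_left hbr hst
        _ ≤ (s - t) * (C * (t ^ k * Real.exp (-(a * t)) * Real.exp (-(a / 2 * (s - t))))) :=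
            mul_le_mul_of_nonneg_left (mul_le_mul_of_nonneg_left hexp hC0) hst
        _ = G2 s := by rw [hG2]; ring
    -- integrate the comparison
    have hbound : |Y0 t| ≤ C * (t ^ k * Real.exp (-(a * t))) * (4 / a ^ 2) := by
      rw [hY0 t ht, ← hG2val]
      calc |∫ s in Set.Ioi t, (s - t) * (g s * Y0 s + Φ s)|
          ≤ ∫ s in Set.Ioi t, |(s - t) * (g s * Y0 s + Φ s)| := by
            have h := norm_integral_le_integral_norm (μ := volume.restrict (Set.Ioi t))
                (fun s => (s - t) * (g s * Y0 s + Φ s))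
            simp only [Real.norm_eq_abs] at h
            exact h
        _ ≤ ∫ s in Set.Ioi t, G2 s := by
            apply integral_mono_of_nonneg
            · exact Filter.Eventually.of_forall fun s => abs_nonneg _
            · exact hG2int
            · exact (ae_restrict_iff' measurableSet_Ioi).2 (Filter.Eventually.of_forall hpt)
    have hexpt : (0 : ℝ) < Real.exp (a * t) := Real.exp_pos _
    rw [div_le_iff₀ htk]
    calc Real.exp (a * t) * |Y0 t|
        ≤ Real.exp (a * t) * (C * (t ^ k * Real.exp (-(a * t))) * (4 / a ^ 2)) :=
          mul_le_mul_of_nonneg_left hbound (le_of_lt hexpt)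
      _ = 4 * C / a ^ 2 * t ^ k := by
          rw [Real.exp_neg]
          field_simp
  -- take the sup
  have hNle : N ≤ 4 * C / a ^ 2 :=
    ciSup_le fun ⟨t, ht⟩ => main t ht
  -- algebra
  have hNle' : a ^ 2 * N ≤ 80 * a2 * N + 4 * M := by
    have h := mul_le_mul_of_nonneg_left hNle (le_of_lt ha2sq)
    have h2 : a ^ 2 * (4 * C / a ^ 2) = 4 * C := by field_simp
    rw [h2, hC] at h
    linarith
  rw [div_mul_eq_mul_div, le_div_iff₀ ha2sq]
  nlinarith [mul_le_mul_of_nonneg_right haa hN0]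
end

section
/- Let a2 > 0 and a ≥ max{1, 15√a2} and C_E > 0 be real numbers, and let t0 ≥ 4. Let g : [t0, ∞) → ℝ be measurable with |g(s)| ≤ 20 a2 and |g(s)| ≤ C_E s e^{−a s} for all s ≥ t0. Suppose Y : [t0, ∞) → ℝ is continuous, satisfies sup_{t ≥ t0} t^{−2} e^{a t} |Y(t) − t| < ∞, and solves the integral equation Y(t) = t + ∫_t^∞ (s − t) g(s) Y(s) ds for all t ≥ t0. Then for all t ≥ t0, |Y(t) − t| ≤ (8 C_E / a²) · t² e^{−a t}. -/
open MeasureTheory Real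

private lemma tendsto_pow_exp_aux (b : ℝ) (hb : 0 < b) (n : ℕ) :
    Filter.Tendsto (fun x : ℝ => x ^ n * Real.exp (-b * x)) Filter.atTop (nhds 0) := by
  refine ((tendsto_rpow_mul_exp_neg_mul_atTop_nhds_zero n b hb).congr' ?_)
  filter_upwards [Filter.eventually_gt_atTop (0 : ℝ)] with x hx
  rw [Real.rpow_natCast]

private lemma hasDerivAt_poly_exp (b c3 c2 c1 c0 : ℝ) (x : ℝ) :
    HasDerivAt (fun x : ℝ => -((c3 * x ^ 3 + c2 * x ^ 2 + c1 * x + c0) * Real.exp (-b * x)))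
      ((b * c3 * x ^ 3 + (b * c2 - 3 * c3) * x ^ 2 + (b * c1 - 2 * c2) * x + (b * c0 - c1))
        * Real.exp (-b * x)) x := by
  have hexp : HasDerivAt (fun x : ℝ => Real.exp (-b * x)) (Real.exp (-b * x) * (-b)) x := by
    simpa using ((hasDerivAt_id x).const_mul (-b)).exp
  have hp : HasDerivAt (fun x : ℝ => c3 * x ^ 3 + c2 * x ^ 2 + c1 * x + c0)
      (c3 * (3 * x ^ 2) + c2 * (2 * x) + c1) x := by
    have h3 := (hasDerivAt_pow 3 x).const_mul c3
    have h2 := (hasDerivAt_pow 2 x).const_mul c2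
    have h1 := (hasDerivAt_id x).const_mul c1
    have := ((h3.add h2).add h1).add_const c0
    refine this.congr_deriv ?_
    push_cast; ring
  have := (hp.mul hexp).neg
  refine this.congr_deriv ?_
  ring

/-- The key improper integral: `∫_t^∞ (s-t) s² e^{-bs} ds = (t²/b² + 4t/b³ + 6/b⁴) e^{-bt}`,
together with integrability. -/
private lemma key_integral (b t : ℝ) (hb : 0 < b) :
    IntegrableOn (fun s => (s - t) * s ^ 2 * Real.exp (-b * s)) (Set.Ioi t) ∧
      ∫ s in Set.Ioi t, (s - t) * s ^ 2 * Real.exp (-b * s)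
        = (t ^ 2 / b ^ 2 + 4 * t / b ^ 3 + 6 / b ^ 4) * Real.exp (-b * t) := by
  set c3 : ℝ := 1 / b with hc3
  set c2 : ℝ := 3 / b ^ 2 - t / b with hc2
  set c1 : ℝ := 6 / b ^ 3 - 2 * t / b ^ 2 with hc1
  set c0 : ℝ := 6 / b ^ 4 - 2 * t / b ^ 3 with hc0
  set F : ℝ → ℝ :=
    fun x => -((c3 * x ^ 3 + c2 * x ^ 2 + c1 * x + c0) * Real.exp (-b * x)) with hF
  have hbne : b ≠ 0 := hb.ne'
  have hderiv : ∀ x ∈ Set.Ici t, HasDerivAt F ((x - t) * x ^ 2 * Real.exp (-b * x)) x := by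
    intro x _
    have h := hasDerivAt_poly_exp b c3 c2 c1 c0 x
    convert h using 1
    rw [hc3, hc2, hc1, hc0]
    field_simp
    ring
  have hpos : ∀ x ∈ Set.Ioi t, 0 ≤ (x - t) * x ^ 2 * Real.exp (-b * x) := by
    intro x hx
    have : (0:ℝ) ≤ x - t := by simp at hx; linarith
    positivity
  have htend : Filter.Tendsto F Filter.atTop (nhds 0) := by
    have h3 := (tendsto_pow_exp_aux b hb 3).const_mul c3
    have h2 := (tendsto_pow_exp_aux b hb 2).const_mul c2
    have h1 := (tendsto_pow_exp_aux b hb 1).const_mul c1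
    have h0 : Filter.Tendsto (fun x : ℝ => c0 * Real.exp (-b * x)) Filter.atTop (nhds 0) := by
      simpa using (tendsto_pow_exp_aux b hb 0).const_mul c0
    have := (((h3.add h2).add h1).add h0).neg
    simp only [mul_zero, add_zero, neg_zero] at this
    refine this.congr (fun x => ?_)
    simp only [pow_one]
    ring
  have hint : IntegrableOn (fun s => (s - t) * s ^ 2 * Real.exp (-b * s)) (Set.Ioi t) :=
    integrableOn_Ioi_deriv_of_nonneg' hderiv hpos htend
  refine ⟨hint, ?_⟩
  have hval := integral_Ioi_of_hasDerivAt_of_nonneg' hderiv hpos htend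
  rw [hval, hF]
  rw [hc3, hc2, hc1, hc0]
  field_simp
  ring

/-- estimate for ∂X/∂v: if `|g(s)| ≤ 20 a2` and
`|g(s)| ≤ C_E s e^{−a s}` for `s ≥ t0`, and the continuous function `Y`, with
`sup_{t ≥ t0} t^{−2} e^{a t} |Y(t) − t| < ∞`, solves
`Y(t) = t + ∫_t^∞ (s − t) g(s) Y(s) ds`, then
`|Y(t) − t| ≤ (8 C_E / a²) t² e^{−a t}` for all `t ≥ t0`. -/
theorem dXdv_estimate
    (a a2 CE t0 : ℝ) (ha2 : 0 < a2) (ha : max 1 (15 * Real.sqrt a2) ≤ a)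
    (hCE : 0 < CE) (ht0 : 4 ≤ t0)
    (g : ℝ → ℝ) (hgm : Measurable g)
    (hg1 : ∀ s ≥ t0, |g s| ≤ 20 * a2)
    (hg2 : ∀ s ≥ t0, |g s| ≤ CE * s * Real.exp (-a * s))
    (Y : ℝ → ℝ) (hYc : ContinuousOn Y (Set.Ici t0))
    (hYfin : BddAbove
      (Set.range fun t : Set.Ici t0 => Real.exp (a * t) * |Y t - t| / (t : ℝ) ^ 2))
    (hYeq : ∀ t ≥ t0, Y t = t + ∫ s in Set.Ioi t, (s - t) * g s * Y s) :
    ∀ t ≥ t0, |Y t - t| ≤ 8 * CE / a ^ 2 * t ^ 2 * Real.exp (-a * t) := by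
  have ha1 : (1:ℝ) ≤ a := le_trans (le_max_left _ _) ha
  have ha0 : (0:ℝ) < a := lt_of_lt_of_le one_pos ha1
  have hasq : 225 * a2 ≤ a ^ 2 := by
    have h15 : 15 * Real.sqrt a2 ≤ a := le_trans (le_max_right _ _) ha
    have hs0 : 0 ≤ 15 * Real.sqrt a2 := by positivity
    have := mul_le_mul h15 h15 hs0 ha0.le
    have hsq : Real.sqrt a2 * Real.sqrt a2 = a2 := Real.mul_self_sqrt ha2.le
    nlinarith
  set M : ℝ := sSup (Set.range fun t : Set.Ici t0 => Real.exp (a * t) * |Y t - t| / (t : ℝ) ^ 2)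
    with hM
  -- pointwise bound from the sup
  have hZbd : ∀ s ≥ t0, |Y s - s| ≤ M * (s ^ 2 * Real.exp (-a * s)) := by
    intro s hs
    have hs0 : (0:ℝ) < s := by linarith
    have hle : Real.exp (a * s) * |Y s - s| / s ^ 2 ≤ M :=
      le_csSup hYfin ⟨⟨s, hs⟩, rfl⟩
    rw [div_le_iff₀ (by positivity)] at hle
    have he : Real.exp (a * s) * Real.exp (-a * s) = 1 := by
      rw [← Real.exp_add]; simp
    nlinarith [Real.exp_pos (a * s), Real.exp_pos (-a * s), abs_nonneg (Y s - s),
      mul_le_mul_of_nonneg_right hle (Real.exp_pos (-a * s)).le]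
  have hM0 : 0 ≤ M := by
    have hmem : Real.exp (a * t0) * |Y t0 - t0| / t0 ^ 2 ≤ M :=
      le_csSup hYfin ⟨⟨t0, le_refl t0⟩, rfl⟩
    have : 0 ≤ Real.exp (a * t0) * |Y t0 - t0| / t0 ^ 2 := by positivity
    linarith
  set K : ℝ := CE + 20 * a2 * M with hK
  have hK0 : 0 < K := by positivity
  -- main estimate at each t
  have hmain : ∀ t ≥ t0, |Y t - t| ≤ 19 / 8 * K / a ^ 2 * (t ^ 2 * Real.exp (-a * t)) := by
    intro t ht
    have ht0' : (0:ℝ) < t := by linarith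
    have hint := key_integral a t ha0
    have heq : Y t - t = ∫ s in Set.Ioi t, (s - t) * g s * Y s := by
      rw [hYeq t ht]; ring
    have hb1 : |Y t - t| ≤ K * ((t ^ 2 / a ^ 2 + 4 * t / a ^ 3 + 6 / a ^ 4)
        * Real.exp (-a * t)) := by
      rw [heq]
      calc |∫ s in Set.Ioi t, (s - t) * g s * Y s|
          ≤ ∫ s in Set.Ioi t, ‖(s - t) * g s * Y s‖ := by
            simpa [Real.norm_eq_abs] using
              norm_integral_le_integral_norm (μ := volume.restrict (Set.Ioi t))
                (fun s => (s - t) * g s * Y s)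
        _ ≤ ∫ s in Set.Ioi t, K * ((s - t) * s ^ 2 * Real.exp (-a * s)) := by
            refine integral_mono_of_nonneg ?_ (hint.1.const_mul K) ?_
            · filter_upwards with s using norm_nonneg _
            · filter_upwards [ae_restrict_mem measurableSet_Ioi] with s hs
              have hst : t < s := hs
              have hst0 : t0 ≤ s := le_trans ht hst.le
              have hs0 : (0:ℝ) < s := by linarith
              have hYs : |Y s| ≤ s + |Y s - s| := by
                have := abs_add_le s (Y s - s)
                simp only [add_sub_cancel] at this
                calc |Y s| ≤ |s| + |Y s - s| := this
                  _ = s + |Y s - s| := by rw [abs_of_pos hs0]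
              have hZs := hZbd s hst0
              have h3 : |g s| * |Y s| ≤ CE * s * Real.exp (-a * s) * s
                  + 20 * a2 * (M * (s ^ 2 * Real.exp (-a * s))) := by
                calc |g s| * |Y s| ≤ |g s| * (s + |Y s - s|) :=
                      mul_le_mul_of_nonneg_left hYs (abs_nonneg _)
                  _ = |g s| * s + |g s| * |Y s - s| := by ring
                  _ ≤ CE * s * Real.exp (-a * s) * s
                      + 20 * a2 * (M * (s ^ 2 * Real.exp (-a * s))) :=
                    add_le_add (mul_le_mul_of_nonneg_right (hg2 s hst0) hs0.le)
                      (mul_le_mul (hg1 s hst0) hZs (abs_nonneg _) (by positivity))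
              calc ‖(s - t) * g s * Y s‖ = (s - t) * (|g s| * |Y s|) := by
                    rw [Real.norm_eq_abs, abs_mul, abs_mul,
                      abs_of_nonneg (by linarith : (0:ℝ) ≤ s - t)]
                    ring
                _ ≤ (s - t) * (CE * s * Real.exp (-a * s) * s
                      + 20 * a2 * (M * (s ^ 2 * Real.exp (-a * s)))) :=
                    mul_le_mul_of_nonneg_left h3 (by linarith)
                _ = K * ((s - t) * s ^ 2 * Real.exp (-a * s)) := by rw [hK]; ring
        _ = K * ((t ^ 2 / a ^ 2 + 4 * t / a ^ 3 + 6 / a ^ 4) * Real.exp (-a * t)) := by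
            rw [integral_const_mul, hint.2]
    -- now bound the polynomial factor
    have hpoly : t ^ 2 / a ^ 2 + 4 * t / a ^ 3 + 6 / a ^ 4 ≤ 19 / 8 * (t ^ 2 / a ^ 2) := by
      have hta : 4 ≤ t * a := by nlinarith
      have key : t ^ 2 * a ^ 2 + 4 * (t * a) + 6 ≤ 19 / 8 * (t ^ 2 * a ^ 2) := by
        nlinarith [mul_nonneg (by linarith : (0:ℝ) ≤ t * a - 4)
          (by linarith : (0:ℝ) ≤ 11 * (t * a) + 12)]
      have h4 : (0:ℝ) < a ^ 4 := by positivity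
      have e1 : t ^ 2 / a ^ 2 + 4 * t / a ^ 3 + 6 / a ^ 4
          = (t ^ 2 * a ^ 2 + 4 * (t * a) + 6) / a ^ 4 := by field_simp
      have e2 : 19 / 8 * (t ^ 2 / a ^ 2) = 19 / 8 * (t ^ 2 * a ^ 2) / a ^ 4 := by
        field_simp
      rw [e1, e2]
      exact (div_le_div_iff_of_pos_right h4).mpr key
    calc |Y t - t| ≤ K * ((t ^ 2 / a ^ 2 + 4 * t / a ^ 3 + 6 / a ^ 4) * Real.exp (-a * t)) := hb1
      _ ≤ K * (19 / 8 * (t ^ 2 / a ^ 2) * Real.exp (-a * t)) := by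
          refine mul_le_mul_of_nonneg_left ?_ hK0.le
          exact mul_le_mul_of_nonneg_right hpoly (Real.exp_pos _).le
      _ = 19 / 8 * K / a ^ 2 * (t ^ 2 * Real.exp (-a * t)) := by ring
  -- conclude M ≤ 19/8 K / a²
  have hMle : M ≤ 19 / 8 * K / a ^ 2 := by
    refine csSup_le ⟨_, ⟨⟨t0, le_refl t0⟩, rfl⟩⟩ ?_
    rintro x ⟨⟨t, ht⟩, rfl⟩
    simp only
    have ht' : t0 ≤ t := ht
    have ht0' : (0:ℝ) < t := by linarith
    rw [div_le_iff₀ (by positivity)]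
    have hb := hmain t ht'
    have he : Real.exp (a * t) * Real.exp (-a * t) = 1 := by
      rw [← Real.exp_add]; simp
    calc Real.exp (a * t) * |Y t - t|
        ≤ Real.exp (a * t) * (19 / 8 * K / a ^ 2 * (t ^ 2 * Real.exp (-a * t))) :=
          mul_le_mul_of_nonneg_left hb (Real.exp_pos _).le
      _ = 19 / 8 * K / a ^ 2 * t ^ 2 * (Real.exp (a * t) * Real.exp (-a * t)) := by ring
      _ = 19 / 8 * K / a ^ 2 * t ^ 2 := by rw [he, mul_one]
  -- deduce M ≤ 8 CE / a²
  have hMfin : M ≤ 8 * CE / a ^ 2 := by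
    have ha2pos : (0:ℝ) < a ^ 2 := by positivity
    rw [le_div_iff₀ ha2pos] at hMle ⊢
    rw [hK] at hMle
    nlinarith [mul_le_mul_of_nonneg_right hasq hM0]
  -- finish
  intro t ht
  have := hZbd t ht
  have h2 : M * (t ^ 2 * Real.exp (-a * t)) ≤ 8 * CE / a ^ 2 * t ^ 2 * Real.exp (-a * t) := by
    have hnn : (0:ℝ) ≤ t ^ 2 * Real.exp (-a * t) := by positivity
    calc M * (t ^ 2 * Real.exp (-a * t)) ≤ 8 * CE / a ^ 2 * (t ^ 2 * Real.exp (-a * t)) :=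
          mul_le_mul_of_nonneg_right hMfin hnn
      _ = 8 * CE / a ^ 2 * t ^ 2 * Real.exp (-a * t) := by ring
  linarith
end
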